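/- In an h-monoidal model category, tensoring a weak equivalence between cofibrant objects with an arbitrary object yields a weak equivalence: if w : X → Y is a weak equivalence with X and Y cofibrant and Z is any object, then w ⊗ 1_Z : X ⊗ Z → Y ⊗ Z is a weak equivalence. -/
import Mathlib


open CategoryTheory CategoryTheory.Limits

universe v u

/-- A model structure on a category: classes of weak equivalences, cofibrations and
fibrations, satisfying the model category axioms (two-out-of-three, closure of the
three classes under retracts, lifting, and factorization). -/
structure ModelStruct (C : Type u) [Category.{v} C] : Type (max u v) where
  /-- weak equivalences -/
  W : MorphismProperty C
  /-- cofibrations -/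
  Cof : MorphismProperty C
  /-- fibrations -/
  Fib : MorphismProperty C
  W_of_isIso : ∀ {X Y : C} (f : X ⟶ Y), IsIso f → W f
  W_comp : ∀ {X Y Z : C} (f : X ⟶ Y) (g : Y ⟶ Z), W f → W g → W (f ≫ g)
  W_of_comp_left : ∀ {X Y Z : C} (f : X ⟶ Y) (g : Y ⟶ Z), W f → W (f ≫ g) → W g
  W_of_comp_right : ∀ {X Y Z : C} (f : X ⟶ Y) (g : Y ⟶ Z), W g → W (f ≫ g) → W f
  W_retract : ∀ {X Y X' Y' : C} (f : X ⟶ Y) (f' : X' ⟶ Y') (i : X ⟶ X') (r : X' ⟶ X)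
      (j : Y ⟶ Y') (s : Y' ⟶ Y), i ≫ r = 𝟙 X → j ≫ s = 𝟙 Y →
      i ≫ f' = f ≫ j → r ≫ f = f' ≫ s → W f' → W f
  Cof_retract : ∀ {X Y X' Y' : C} (f : X ⟶ Y) (f' : X' ⟶ Y') (i : X ⟶ X') (r : X' ⟶ X)
      (j : Y ⟶ Y') (s : Y' ⟶ Y), i ≫ r = 𝟙 X → j ≫ s = 𝟙 Y →
      i ≫ f' = f ≫ j → r ≫ f = f' ≫ s → Cof f' → Cof f
  Fib_retract : ∀ {X Y X' Y' : C} (f : X ⟶ Y) (f' : X' ⟶ Y') (i : X ⟶ X') (r : X' ⟶ X)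
      (j : Y ⟶ Y') (s : Y' ⟶ Y), i ≫ r = 𝟙 X → j ≫ s = 𝟙 Y →
      i ≫ f' = f ≫ j → r ≫ f = f' ≫ s → Fib f' → Fib f
  lift : ∀ {A B X Y : C} (i : A ⟶ B) (p : X ⟶ Y), Cof i → Fib p → (W i ∨ W p) →
      ∀ (u : A ⟶ X) (v : B ⟶ Y), u ≫ p = i ≫ v → ∃ l : B ⟶ X, i ≫ l = u ∧ l ≫ p = v
  factorization_cof_trivFib : ∀ {X Y : C} (f : X ⟶ Y), ∃ (Z : C) (i : X ⟶ Z) (p : Z ⟶ Y),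
      Cof i ∧ Fib p ∧ W p ∧ i ≫ p = f
  factorization_trivCof_fib : ∀ {X Y : C} (f : X ⟶ Y), ∃ (Z : C) (i : X ⟶ Z) (p : Z ⟶ Y),
      Cof i ∧ W i ∧ Fib p ∧ i ≫ p = f

variable {C : Type u} [Category.{v} C]

/-- A morphism `f : X ⟶ Y` is an h-cofibration if cobase change along `f` preserves
weak equivalences: for every `g : X ⟶ A`, every weak equivalence `w : A ⟶ B`, and
pushouts `P = Y ⊔_X A` (of `g` along `f`) and `Q = Y ⊔_X B` (of `g ≫ w` along `f`),
the induced map `w' : P ⟶ Q` is a weak equivalence. -/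
def HCof (M : ModelStruct C) {X Y : C} (f : X ⟶ Y) : Prop :=
  ∀ ⦃A B P Q : C⦄ (g : X ⟶ A) (w : A ⟶ B)
    (a : A ⟶ P) (y : Y ⟶ P) (b : B ⟶ Q) (y' : Y ⟶ Q) (w' : P ⟶ Q),
    M.W w → IsPushout g f a y → IsPushout (g ≫ w) f b y' →
    a ≫ w' = w ≫ b → y ≫ w' = y' → M.W w'

/-- A model category is left proper if the pushout of a weak equivalence along a
cofibration is again a weak equivalence. -/
def LeftProper (M : ModelStruct C) : Prop :=
  ∀ ⦃X Y Z P : C⦄ (i : X ⟶ Y) (w : X ⟶ Z) (h : Z ⟶ P) (k : Y ⟶ P),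
    M.Cof i → M.W w → IsPushout w i h k → M.W k

open MonoidalCategory

/-- A monoidal model category: a model structure together with a monoidal structure
satisfying the pushout–product axiom: for cofibrations `f : X ⟶ Y` and
`g : X' ⟶ Y'`, the induced map `(Y ⊗ X') ⊔_{X ⊗ X'} (X ⊗ Y') ⟶ Y ⊗ Y'` is a
cofibration, and a trivial cofibration if `f` or `g` is a weak equivalence. -/
structure MonoidalModel (C : Type u) [Category.{v} C] [MonoidalCategory C] extends
    ModelStruct C where
  pushout_product :
    ∀ {X Y X' Y' P : C} (f : X ⟶ Y) (g : X' ⟶ Y')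
      (inl : Y ⊗ X' ⟶ P) (inr : X ⊗ Y' ⟶ P) (h : P ⟶ Y ⊗ Y'),
      Cof f → Cof g →
      IsPushout (f ▷ X') (X ◁ g) inl inr →
      inl ≫ h = Y ◁ g → inr ≫ h = f ▷ Y' →
      Cof h ∧ ((W f ∨ W g) → W h)

variable [MonoidalCategory C]

/-- A monoidal model category is h-monoidal if for each cofibration
(resp. trivial cofibration) `f` and each object `Z` the morphism `f ▷ Z`
(that is, `f ⊗ 𝟙 Z`) is an h-cofibration (resp. a trivial h-cofibration). -/
def HMonoidal (M : MonoidalModel C) : Prop :=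
  (∀ {X Y : C} (f : X ⟶ Y) (Z : C), M.Cof f → HCof M.toModelStruct (f ▷ Z)) ∧
  (∀ {X Y : C} (f : X ⟶ Y) (Z : C), M.Cof f → M.W f →
    HCof M.toModelStruct (f ▷ Z) ∧ M.W (f ▷ Z))

/-- Left lifting property against trivial fibrations. -/
def LLPtf (M : ModelStruct C) {X Y : C} (f : X ⟶ Y) : Prop :=
  ∀ ⦃A B : C⦄ (p : A ⟶ B), M.Fib p → M.W p →
    ∀ (u : X ⟶ A) (v : Y ⟶ B), u ≫ p = f ≫ v → ∃ l : Y ⟶ A, f ≫ l = u ∧ l ≫ p = v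

theorem cof_llp (M : ModelStruct C) {X Y : C} (f : X ⟶ Y) (hf : M.Cof f) : LLPtf M f :=
  fun _ _ p hp hwp u v huv => M.lift f p hf hp (Or.inr hwp) u v huv

theorem llp_cof (M : ModelStruct C) {X Y : C} (f : X ⟶ Y) (hf : LLPtf M f) : M.Cof f := by
  obtain ⟨Z', i, p, hi, hp, hwp, hip⟩ := M.factorization_cof_trivFib f
  obtain ⟨l, hl1, hl2⟩ := hf p hp hwp i (𝟙 Y) (by simp [hip])
  exact M.Cof_retract f i (𝟙 X) (𝟙 X) l p (by simp) (by simp [hl2])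
    (by simp [hl1]) (by simp [hip]) hi

theorem cof_pushout (M : ModelStruct C) {X Y A P : C} (g : X ⟶ A) (f : X ⟶ Y)
    (h : A ⟶ P) (k : Y ⟶ P) (hpo : IsPushout g f h k) (hf : M.Cof f) : M.Cof h := by
  refine llp_cof M h (fun A' B' p hp hwp u v huv => ?_)
  obtain ⟨l, hl1, hl2⟩ := cof_llp M f hf p hp hwp (g ≫ u) (k ≫ v)
    (by rw [Category.assoc, huv, hpo.w_assoc])
  refine ⟨hpo.desc u l hl1.symm, hpo.inl_desc _ _ _, ?_⟩
  apply hpo.hom_ext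
  · rw [hpo.inl_desc_assoc, huv]
  · rw [hpo.inr_desc_assoc, hl2]

theorem cof_comp (M : ModelStruct C) {X Y Z : C} (f : X ⟶ Y) (g : Y ⟶ Z)
    (hf : M.Cof f) (hg : M.Cof g) : M.Cof (f ≫ g) := by
  refine llp_cof M _ (fun A B p hp hwp u v huv => ?_)
  obtain ⟨l, hl1, hl2⟩ := cof_llp M f hf p hp hwp u (g ≫ v) (by rw [huv, Category.assoc])
  obtain ⟨m, hm1, hm2⟩ := cof_llp M g hg p hp hwp l v hl2
  exact ⟨m, by rw [Category.assoc, hm1, hl1], hm2⟩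

/-- In an h-monoidal model category, tensoring a weak equivalence between cofibrant
objects with an arbitrary object yields a weak equivalence. -/
theorem statement_13 [HasPushouts C] [HasInitial C]
    (M : MonoidalModel C) (hmon : HMonoidal M)
    {X Y : C} (w : X ⟶ Y) (hw : M.W w)
    (hX : M.Cof (initial.to X)) (hY : M.Cof (initial.to Y)) (Z : C) :
    M.W (w ▷ Z) := by
  -- coproduct X ⊔ Y as pushout over the initial object
  let S := pushout (initial.to X) (initial.to Y)
  let inl : X ⟶ S := pushout.inl _ _
  let inr : Y ⟶ S := pushout.inr _ _
  have hpo : IsPushout (initial.to X) (initial.to Y) inl inr :=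
    IsPushout.of_hasPushout _ _
  have hCinl : M.Cof inl := cof_pushout M.toModelStruct _ _ _ _ hpo hY
  have hCinr : M.Cof inr := cof_pushout M.toModelStruct _ _ _ _ hpo.flip hX
  -- the map S ⟶ Y given by w and 𝟙
  let fold : S ⟶ Y := pushout.desc w (𝟙 Y) (initial.hom_ext _ _)
  have hfoldl : inl ≫ fold = w := pushout.inl_desc _ _ _
  have hfoldr : inr ≫ fold = 𝟙 Y := pushout.inr_desc _ _ _
  -- factor fold = q ≫ p with q a cofibration and p a trivial fibration
  obtain ⟨Cyl, q, p, hq, hpFib, hpW, hqp⟩ := M.factorization_cof_trivFib fold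
  -- the two inclusions into the cylinder are trivial cofibrations
  have hC1 : M.Cof (inl ≫ q) := cof_comp M.toModelStruct _ _ hCinl hq
  have hC2 : M.Cof (inr ≫ q) := cof_comp M.toModelStruct _ _ hCinr hq
  have hW1 : M.W (inl ≫ q) :=
    M.W_of_comp_right _ p hpW (by rw [Category.assoc, hqp, hfoldl]; exact hw)
  have hW2 : M.W (inr ≫ q) :=
    M.W_of_comp_right _ p hpW
      (by rw [Category.assoc, hqp, hfoldr]; exact M.W_of_isIso _ inferInstance)
  -- tensor with Z
  have hT1 : M.W ((inl ≫ q) ▷ Z) := (hmon.2 _ Z hC1 hW1).2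
  have hT2 : M.W ((inr ≫ q) ▷ Z) := (hmon.2 _ Z hC2 hW2).2
  have hTp : M.W (p ▷ Z) := by
    apply M.W_of_comp_left ((inr ≫ q) ▷ Z) (p ▷ Z) hT2
    rw [← comp_whiskerRight, Category.assoc, hqp, hfoldr]
    exact M.W_of_isIso _ inferInstance
  have := M.W_comp _ _ hT1 hTp
  rw [← comp_whiskerRight, Category.assoc, hqp, hfoldl] at this
  exact this
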